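/- The creation operators pairwise commute: [A_i^†, A_j^†] = 0, and likewise the annihilation operators: [\bar{A}_i, \bar{A}_j] = 0, as operators on ℂ[x_1,…,x_N]. -/

import Mathlib

/-!
Both families have the form `a d_i + b x_i` with `a, b` independent of `i`, and
`(a d_i + b x_i)(a d_j + b x_j) = a² d_i d_j + a b (d_i x_j + x_i d_j) + b² x_i x_j`.
So it suffices that the Dunkl operators commute and that `d_i x_j + x_i d_j` is symmetric in
`i, j`; the latter holds because `d_i x_j - x_j d_i = -λ s_{ij}` for `i ≠ j`, where `s_{ij}`
exchanges `x_i` and `x_j`. That `d_i d_j = d_j d_i` is proved by induction on the polynomial,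
moving `d_i` and `d_j` past one factor `x_k` at a time; the correction terms cancel by the
equivariance `σ ∘ d_c = d_{σ c} ∘ σ` of the Dunkl operators under permutations `σ` of the
variables.
-/

open MvPolynomial Finset

/-- The operator exchanging the variables `x i` and `x j` in `ℂ[x_1,…,x_N]`. -/
noncomputable def exchange (N : ℕ) (i j : Fin N) :
    MvPolynomial (Fin N) ℂ →ₗ[ℂ] MvPolynomial (Fin N) ℂ :=
  (rename (Equiv.swap i j)).toLinearMap

/-- `d` is the family of Dunkl operators with parameter `lam`, stated with
denominators cleared. -/
def IsDunkl (N : ℕ) (lam : ℂ)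
    (d : Fin N → (MvPolynomial (Fin N) ℂ →ₗ[ℂ] MvPolynomial (Fin N) ℂ)) : Prop :=
  ∀ (i : Fin N) (f : MvPolynomial (Fin N) ℂ),
    (∏ j ∈ univ.erase i, (X i - X j)) * d i f =
      (∏ j ∈ univ.erase i, (X i - X j)) * pderiv i f +
        lam • ∑ j ∈ univ.erase i,
          (∏ k ∈ (univ.erase i).erase j, (X i - X k)) * (f - exchange N i j f)

/-- The creation operator `A_i^† = −h d_i + ω x_i`. -/
noncomputable def creation (N : ℕ) (h ω : ℝ)
    (d : Fin N → (MvPolynomial (Fin N) ℂ →ₗ[ℂ] MvPolynomial (Fin N) ℂ)) (i : Fin N) :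
    MvPolynomial (Fin N) ℂ →ₗ[ℂ] MvPolynomial (Fin N) ℂ :=
  (-(h : ℂ)) • d i + (ω : ℂ) • LinearMap.mulLeft ℂ (X i)

/-- The (normalized) annihilation operator `\bar A_i = (h d_i + ω x_i)/(2hω)`. -/
noncomputable def annihilation (N : ℕ) (h ω : ℝ)
    (d : Fin N → (MvPolynomial (Fin N) ℂ →ₗ[ℂ] MvPolynomial (Fin N) ℂ)) (i : Fin N) :
    MvPolynomial (Fin N) ℂ →ₗ[ℂ] MvPolynomial (Fin N) ℂ :=
  ((2 * h * ω : ℝ) : ℂ)⁻¹ • ((h : ℂ) • d i + (ω : ℂ) • LinearMap.mulLeft ℂ (X i))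

theorem Commute.smul_add_smul {R A : Type*} [CommSemiring R] [Semiring A] [Algebra R A]
    {x y x' y' : A} (hx : Commute x x') (hy : Commute y y')
    (hxy : x * y' + y * x' = x' * y + y' * x) (a b : R) :
    Commute (a • x + b • y) (a • x' + b • y') := by
  have expand : ∀ u v u' v' : A, (a • u + b • v) * (a • u' + b • v')
      = (a * a) • (u * u') + (a * b) • (u * v' + v * u') + (b * b) • (v * v') := by
    intro u v u' v'
    simp only [add_mul, mul_add, smul_mul_smul_comm, smul_add]
    rw [mul_comm b a]
    abel
  rw [Commute, SemiconjBy, expand, expand, hx.eq, hy.eq, hxy]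

theorem Finset.sum_erase_univ_comp_equiv {ι M : Type*} [Fintype ι] [DecidableEq ι]
    [AddCommMonoid M] (e : ι ≃ ι) (c : ι) (g : ι → M) :
    ∑ j ∈ univ.erase c, g (e j) = ∑ j ∈ univ.erase (e c), g j :=
  sum_equiv e (by simp) fun _ _ => rfl

namespace MvPolynomial

variable {R σ τ : Type*}

theorem prod_X_sub_X_ne_zero [CommRing R] [IsDomain R] {s : Finset σ} {i : σ} (hi : i ∉ s) :
    ∏ k ∈ s, (X i - X k : MvPolynomial σ R) ≠ 0 :=
  prod_ne_zero_iff.mpr fun _ hk => sub_ne_zero.mpr fun h => hi (X_injective h ▸ hk)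

theorem rename_prod_X_sub_X [CommRing R] (e : σ ≃ τ) (i : σ) (s : Finset σ) :
    rename e (∏ k ∈ s, (X i - X k : MvPolynomial σ R))
      = ∏ k ∈ s.map e.toEmbedding, (X (e i) - X k) := by
  simp [map_prod, prod_map]

theorem rename_rename_swap [CommSemiring R] [DecidableEq σ] [DecidableEq τ] (e : σ ≃ τ)
    (i j : σ) (f : MvPolynomial σ R) :
    rename e (rename (Equiv.swap i j) f) = rename (Equiv.swap (e i) (e j)) (rename e f) := by
  rw [rename_rename, rename_rename, ← Equiv.symm_trans_swap_trans]
  congr 2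
  funext x
  simp only [Function.comp_apply, Equiv.trans_apply, Equiv.symm_apply_apply]

theorem linearMap_C_mul [CommSemiring R] (L : MvPolynomial σ R →ₗ[R] MvPolynomial τ R) (a : R)
    (f : MvPolynomial σ R) : L (C a * f) = C a * L f := by
  rw [C_mul', C_mul', map_smul]

end MvPolynomial

theorem exchange_apply {N : ℕ} (i j : Fin N) (f : MvPolynomial (Fin N) ℂ) :
    exchange N i j f = rename (Equiv.swap i j) f :=
  rfl

namespace IsDunkl

local notation "δ[" i ", " s "]" => ∏ m ∈ s, (X i - X m)

variable {N : ℕ} {lam : ℂ}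
  {d : Fin N → (MvPolynomial (Fin N) ℂ →ₗ[ℂ] MvPolynomial (Fin N) ℂ)}

theorem apply_C (hd : IsDunkl N lam d) (i : Fin N) (a : ℂ) : d i (C a) = 0 := by
  have h := hd i (C a)
  simp only [exchange_apply, pderiv_C, rename_C, sub_self, mul_zero, sum_const_zero,
    smul_zero, add_zero] at h
  exact (mul_eq_zero.mp h).resolve_left (prod_X_sub_X_ne_zero (notMem_erase i univ))

theorem apply_X_mul_of_ne (hd : IsDunkl N lam d) {i k : Fin N} (hk : k ≠ i)
    (f : MvPolynomial (Fin N) ℂ) :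
    d i (X k * f) = X k * d i f - C lam * rename (Equiv.swap i k) f := by
  have hk' : k ∈ univ.erase i := mem_erase.mpr ⟨hk, mem_univ k⟩
  have hXk := hd i (X k * f)
  have hf := hd i f
  simp only [exchange_apply, smul_eq_C_mul] at hXk hf
  rw [pderiv_mul, pderiv_X_of_ne hk, zero_mul, zero_add] at hXk
  have hsum : ∑ j ∈ univ.erase i, δ[i, (univ.erase i).erase j]
        * (X k * f - rename (Equiv.swap i j) (X k * f))
      = X k * ∑ j ∈ univ.erase i, δ[i, (univ.erase i).erase j]
          * (f - rename (Equiv.swap i j) f)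
        - δ[i, univ.erase i] * rename (Equiv.swap i k) f := by
    rw [mul_sum, ← add_sum_erase _ _ hk', ← add_sum_erase _ _ hk',
      ← mul_prod_erase _ (fun m => X i - X m) hk', map_mul, rename_X, Equiv.swap_apply_right]
    have hfar : ∀ j ∈ (univ.erase i).erase k,
        δ[i, (univ.erase i).erase j] * (X k * f - rename (Equiv.swap i j) (X k * f))
          = X k * (δ[i, (univ.erase i).erase j] * (f - rename (Equiv.swap i j) f)) := by
      intro j hj
      rw [map_mul, rename_X, Equiv.swap_apply_of_ne_of_ne hk (ne_of_mem_erase hj).symm]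
      ring
    rw [sum_congr rfl hfar]
    ring
  rw [hsum] at hXk
  refine mul_left_cancel₀ (prod_X_sub_X_ne_zero (notMem_erase i univ)) ?_
  linear_combination hXk - X k * hf

theorem apply_X_mul_self (hd : IsDunkl N lam d) (i : Fin N) (f : MvPolynomial (Fin N) ℂ) :
    d i (X i * f)
      = X i * d i f + f + C lam * ∑ j ∈ univ.erase i, rename (Equiv.swap i j) f := by
  have hXi := hd i (X i * f)
  have hf := hd i f
  simp only [exchange_apply, smul_eq_C_mul] at hXi hf
  rw [pderiv_mul, pderiv_X_self, one_mul] at hXi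
  have hsum : ∑ j ∈ univ.erase i, δ[i, (univ.erase i).erase j]
        * (X i * f - rename (Equiv.swap i j) (X i * f))
      = X i * ∑ j ∈ univ.erase i, δ[i, (univ.erase i).erase j]
          * (f - rename (Equiv.swap i j) f)
        + δ[i, univ.erase i] * ∑ j ∈ univ.erase i, rename (Equiv.swap i j) f := by
    rw [mul_sum, mul_sum, ← sum_add_distrib]
    refine sum_congr rfl fun j hj => ?_
    rw [← mul_prod_erase _ (fun m => X i - X m) hj, map_mul, rename_X, Equiv.swap_apply_left]
    ring
  rw [hsum] at hXi
  refine mul_left_cancel₀ (prod_X_sub_X_ne_zero (notMem_erase i univ)) ?_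
  linear_combination hXi - X i * hf

theorem rename_apply (hd : IsDunkl N lam d) (e : Equiv.Perm (Fin N)) (c : Fin N)
    (f : MvPolynomial (Fin N) ℂ) : rename e (d c f) = d (e c) (rename e f) := by
  have hmap : (univ.erase c).map e.toEmbedding = univ.erase (e c) := by
    rw [map_erase, map_univ_equiv, Equiv.coe_toEmbedding]
  refine mul_left_cancel₀ (prod_X_sub_X_ne_zero (notMem_erase (e c) univ)) ?_
  calc δ[e c, univ.erase (e c)] * rename e (d c f)
      = rename e (δ[c, univ.erase c] * d c f) := by
        rw [map_mul, rename_prod_X_sub_X, hmap]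
    _ = rename e (δ[c, univ.erase c] * pderiv c f + lam • ∑ j ∈ univ.erase c,
          δ[c, (univ.erase c).erase j] * (f - exchange N c j f)) := by rw [hd c f]
    _ = δ[e c, univ.erase (e c)] * pderiv (e c) (rename e f) + lam • ∑ j ∈ univ.erase (e c),
          δ[e c, (univ.erase (e c)).erase j] * (rename e f - exchange N (e c) j (rename e f)) := by
        rw [map_add, map_mul, map_smul, map_sum, rename_prod_X_sub_X, hmap,
          ← pderiv_rename e.injective, ← sum_erase_univ_comp_equiv e c]
        simp only [exchange_apply, map_mul, map_sub, rename_prod_X_sub_X, map_erase, hmap,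
          rename_rename_swap, Equiv.coe_toEmbedding]
    _ = δ[e c, univ.erase (e c)] * d (e c) (rename e f) := (hd (e c) (rename e f)).symm

theorem rename_swap_apply_of_ne (hd : IsDunkl N lam d) {a b c : Fin N} (ha : c ≠ a) (hb : c ≠ b)
    (f : MvPolynomial (Fin N) ℂ) :
    rename (Equiv.swap a b) (d c f) = d c (rename (Equiv.swap a b) f) := by
  simpa only [Equiv.swap_apply_of_ne_of_ne ha hb] using hd.rename_apply (Equiv.swap a b) c f

theorem rename_swap_apply_right (hd : IsDunkl N lam d) (a b : Fin N)
    (f : MvPolynomial (Fin N) ℂ) :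
    rename (Equiv.swap a b) (d b f) = d a (rename (Equiv.swap a b) f) := by
  simpa only [Equiv.swap_apply_right] using hd.rename_apply (Equiv.swap a b) b f

theorem comm_X_mul_of_ne (hd : IsDunkl N lam d) {i j k : Fin N} (hij : i ≠ j) (hki : k ≠ i)
    (hkj : k ≠ j) {f : MvPolynomial (Fin N) ℂ} (hf : d i (d j f) = d j (d i f)) :
    d i (d j (X k * f)) = d j (d i (X k * f)) := by
  rw [hd.apply_X_mul_of_ne hkj, map_sub, linearMap_C_mul, hd.apply_X_mul_of_ne hki,
    hd.apply_X_mul_of_ne hki, map_sub, linearMap_C_mul, hd.apply_X_mul_of_ne hkj,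
    hd.rename_swap_apply_of_ne hij.symm hkj.symm, ← hd.rename_swap_apply_of_ne hij hki.symm, hf]
  ring

theorem comm_X_mul_right (hd : IsDunkl N lam d) {i j : Fin N} (hij : i ≠ j)
    {f : MvPolynomial (Fin N) ℂ} (hf : d i (d j f) = d j (d i f)) :
    d i (d j (X j * f)) = d j (d i (X j * f)) := by
  have hi : i ∈ univ.erase j := mem_erase.mpr ⟨hij, mem_univ i⟩
  have hfar : ∀ m ∈ (univ.erase j).erase i,
      rename (Equiv.swap j m) (d i f) = d i (rename (Equiv.swap j m) f) := fun m hm =>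
    hd.rename_swap_apply_of_ne hij (ne_of_mem_erase hm).symm f
  -- Only the `m = i` summands of the two exchange sums are not matched by `hfar`; they cancel
  -- against the terms `λ s_{ij}` coming from `d_i x_j = x_j d_i - λ s_{ij}`.
  rw [hd.apply_X_mul_self, map_add, map_add, linearMap_C_mul, map_sum,
    hd.apply_X_mul_of_ne hij.symm, hd.rename_swap_apply_right, hd.apply_X_mul_of_ne hij.symm,
    map_sub, linearMap_C_mul, hd.apply_X_mul_self, ← add_sum_erase _ _ hi,
    ← add_sum_erase _ _ hi, sum_congr rfl hfar, hd.rename_swap_apply_right,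
    Equiv.swap_comm j i, hf]
  ring

theorem comm_X_mul (hd : IsDunkl N lam d) {i j : Fin N} (hij : i ≠ j) (k : Fin N)
    {f : MvPolynomial (Fin N) ℂ} (hf : d i (d j f) = d j (d i f)) :
    d i (d j (X k * f)) = d j (d i (X k * f)) := by
  rcases eq_or_ne k j with rfl | hkj
  · exact hd.comm_X_mul_right hij hf
  rcases eq_or_ne k i with rfl | hki
  · exact (hd.comm_X_mul_right hij.symm hf.symm).symm
  exact hd.comm_X_mul_of_ne hij hki hkj hf

theorem commute (hd : IsDunkl N lam d) (i j : Fin N) : Commute (d i) (d j) := by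
  rcases eq_or_ne i j with rfl | hij
  · exact Commute.refl _
  refine LinearMap.ext fun f => ?_
  induction f using MvPolynomial.induction_on with
  | C a => simp only [Module.End.mul_apply, hd.apply_C, map_zero]
  | add p q hp hq => simp only [map_add, hp, hq]
  | mul_X p k hp => rw [mul_comm p]; exact hd.comm_X_mul hij k hp

theorem mul_mulLeft_X_add_mulLeft_X_mul_comm (hd : IsDunkl N lam d) (i j : Fin N) :
    d i * LinearMap.mulLeft ℂ (X j) + LinearMap.mulLeft ℂ (X i) * d j
      = d j * LinearMap.mulLeft ℂ (X i) + LinearMap.mulLeft ℂ (X j) * d i := by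
  rcases eq_or_ne i j with rfl | hij
  · rfl
  refine LinearMap.ext fun f => ?_
  simp only [LinearMap.add_apply, Module.End.mul_apply, LinearMap.mulLeft_apply]
  rw [hd.apply_X_mul_of_ne hij.symm, hd.apply_X_mul_of_ne hij, Equiv.swap_comm j i]
  ring

theorem commute_smul_add_smul_mulLeft_X (hd : IsDunkl N lam d) (a b : ℂ) (i j : Fin N) :
    Commute (a • d i + b • LinearMap.mulLeft ℂ (X i))
      (a • d j + b • LinearMap.mulLeft ℂ (X j)) :=
  (hd.commute i j).smul_add_smul ((Commute.all (X i) (X j)).map (Algebra.lmul ℂ _))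
    (hd.mul_mulLeft_X_add_mulLeft_X_mul_comm i j) a b

end IsDunkl

theorem creation_annihilation_commute_general (N : ℕ) (h ω : ℝ)
    (lam : ℂ) (d : Fin N → (MvPolynomial (Fin N) ℂ →ₗ[ℂ] MvPolynomial (Fin N) ℂ))
    (hd : IsDunkl N lam d) (i j : Fin N) :
    creation N h ω d i ∘ₗ creation N h ω d j
      = creation N h ω d j ∘ₗ creation N h ω d i ∧
    annihilation N h ω d i ∘ₗ annihilation N h ω d j
      = annihilation N h ω d j ∘ₗ annihilation N h ω d i :=
  ⟨(hd.commute_smul_add_smul_mulLeft_X (-(h : ℂ)) ω i j).eq,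
    (((hd.commute_smul_add_smul_mulLeft_X h ω i j).smul_left _).smul_right _).eq⟩

/-- The creation operators pairwise commute, and so do the annihilation operators:
`[A_i^†, A_j^†] = 0` and `[\bar A_i, \bar A_j] = 0`. -/
theorem creation_annihilation_commute (N : ℕ) (h ω : ℝ) (hh : 0 < h) (hω : 0 < ω)
    (lam : ℂ) (d : Fin N → (MvPolynomial (Fin N) ℂ →ₗ[ℂ] MvPolynomial (Fin N) ℂ))
    (hd : IsDunkl N lam d) (i j : Fin N) :
    creation N h ω d i ∘ₗ creation N h ω d j
      = creation N h ω d j ∘ₗ creation N h ω d i ∧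
    annihilation N h ω d i ∘ₗ annihilation N h ω d j
      = annihilation N h ω d j ∘ₗ annihilation N h ω d i :=
  creation_annihilation_commute_general N h ω lam d hd i j
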